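/- With the linear-in-$\sin$ mapping, the aligned-phase channel at a shifted frequency factors as a product independent of the design frequency: $h(\theta_k, f_k + \Delta f) = \frac{h_M(k)}{N}\sum_{n=1}^N e^{-i 2\pi\alpha(\nu_n\Delta_\nu\cos\phi + \zeta_n\Delta_\zeta\sin\phi)\Delta f/\lambda_0}$; in particular the normalized gain $|h(\theta_k, f_k+\Delta f)|/|h_M(k)|$ depends only on $\Delta f$ (and not on $k$), hence the MTP bandwidth is the same for every steering angle. -/

import Mathlib

open Complex

/- The design phases cancel the steering and incidence phases exactly at `(θk, fk)`, leaving the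
common phase `ψ₀` times a residual linear in `f - fk` whose slope does not involve `fk`. -/

/-- Both sides vanish for `N = 0`, where `N * c / N` is the junk value `0`. -/
lemma natCast_mul_div_natCast_mul_sum {N : ℕ} (c : ℂ) (g : Fin N → ℂ) :
    (N * c / N) * ∑ n, g n = c * ∑ n, g n := by
  rcases Nat.eq_zero_or_pos N with rfl | hN
  · simp
  · rw [mul_div_cancel_left₀ c (Nat.cast_ne_zero.mpr hN.ne')]

theorem stmt_17_general (N : ℕ) (lam0 α γ f₀ uinc ψ₀ : ℝ)
    (d : Fin N → ℝ)
    (ω : ℝ → Fin N → ℝ)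
    (hω : ∀ θ n, ω θ n = 2 * Real.pi / lam0 * d n * Real.sin θ)
    (ψ : ℝ → Fin N → ℝ)
    (hψ : ∀ f n, ψ f n = -(2 * Real.pi / lam0) * d n * (uinc + (α * (f - f₀) + γ)) + ψ₀)
    (ι : Fin N → ℝ) (hι : ∀ n, ι n = 2 * Real.pi / lam0 * d n * uinc)
    (h : ℝ → ℝ → ℂ)
    (hh : ∀ θ f, h θ f = ∑ n, Complex.exp (Complex.I * ω θ n) *
        Complex.exp (Complex.I * ψ f n) * Complex.exp (Complex.I * ι n))
    (fk θk : ℝ) (hθk : Real.sin θk = α * (fk - f₀) + γ) (Δf : ℝ) :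
    h θk (fk + Δf) = (h θk fk / N) *
      ∑ n, Complex.exp (-Complex.I * (2 * Real.pi * α * d n * Δf / lam0)) ∧
    h θk fk = N * Complex.exp (Complex.I * ψ₀) := by
  have term_eq : ∀ f n, exp (I * ω θk n) * exp (I * ψ f n) * exp (I * ι n) =
      exp (I * ψ₀) * exp (-I * (2 * Real.pi * α * d n * ((f - fk : ℝ) : ℂ) / lam0)) := by
    intro f n
    simp only [← exp_add]
    congr 1
    rw [hω, hψ, hι, hθk]
    push_cast
    ring
  have aligned : h θk fk = N * exp (I * ψ₀) := by simp [hh, term_eq]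
  refine ⟨?_, aligned⟩
  rw [hh, aligned, natCast_mul_div_natCast_mul_sum, Finset.mul_sum]
  simp only [term_eq, add_sub_cancel_left]

theorem stmt_17 (N : ℕ) (lam0 Δν Δζ φ α γ f₀ uinc ψ₀ : ℝ)
    (ν ζ : Fin N → ℝ)
    (d : Fin N → ℝ) (hd : ∀ n, d n = ν n * Δν * Real.cos φ + ζ n * Δζ * Real.sin φ)
    (ω : ℝ → Fin N → ℝ)
    (hω : ∀ θ n, ω θ n = 2 * Real.pi / lam0 * d n * Real.sin θ)
    (ψ : ℝ → Fin N → ℝ)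
    (hψ : ∀ f n, ψ f n = -(2 * Real.pi / lam0) * d n * (uinc + (α * (f - f₀) + γ)) + ψ₀)
    (ι : Fin N → ℝ) (hι : ∀ n, ι n = 2 * Real.pi / lam0 * d n * uinc)
    (h : ℝ → ℝ → ℂ)
    (hh : ∀ θ f, h θ f = ∑ n, Complex.exp (Complex.I * ω θ n) *
        Complex.exp (Complex.I * ψ f n) * Complex.exp (Complex.I * ι n))
    (fk θk : ℝ) (hθk : Real.sin θk = α * (fk - f₀) + γ) (Δf : ℝ) :
    h θk (fk + Δf) = (h θk fk / N) *
      ∑ n, Complex.exp (-Complex.I * (2 * Real.pi * α * d n * Δf / lam0)) ∧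
    h θk fk = N * Complex.exp (Complex.I * ψ₀) :=
  stmt_17_general N lam0 α γ f₀ uinc ψ₀ d ω hω ψ hψ ι hι h hh fk θk hθk Δf
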